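/- arXiv:2406.09699 — 4 statements merged into one kernel-verified Lean document; each statement's English description precedes it below -/
import Mathlib

section
/- Let θ ∈ ℝ and let L : ℂ → ℂ be complex differentiable (holomorphic) on an open ball of ℂ centered at θ, and suppose L maps real points of this ball to real values. Let g : ℝ → ℝ denote the restriction of L to the reals (g(x) = Re L(x) for real x). Then there exist constants C > 0 and ε₀ > 0 such that for all ε with 0 < ε < ε₀, |Im(L(θ + iε))/ε − g'(θ)| ≤ C ε²; that is, the complex-step quotient Im(L(θ + iε))/ε approximates the real derivative with second-order accuracy O(ε²). -/
/-!
Since `L` is real on the real axis, so are all its complex derivatives at `θ`, hence all of its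
Taylor coefficients `aₙ` there. In `L(θ + iε) = a₀ + a₁ iε - a₂ ε² + O(ε³)` the only non-real term
is `a₁ iε`, so `Im L(θ + iε) = a₁ ε + O(ε³)`, and `a₁ = L'(θ)` is also the derivative of the real
restriction of `L`.
-/

open Complex Filter Asymptotics Topology Metric

lemma Asymptotics.IsBigO.exists_pos_forall_norm_le {E F G : Type*} [SeminormedAddCommGroup E]
    [Norm F] [SeminormedAddCommGroup G] {f : E → F} {g : E → G} (h : f =O[𝓝 0] g) :
    ∃ C > 0, ∃ δ > 0, ∀ x, ‖x‖ < δ → ‖f x‖ ≤ C * ‖g x‖ := by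
  obtain ⟨C, hC, hCfg⟩ := h.exists_pos
  obtain ⟨δ, hδ, hδfg⟩ := Metric.eventually_nhds_iff.1 hCfg.bound
  exact ⟨C, hC, δ, hδ, fun x hx => hδfg (by simpa using hx)⟩

namespace Complex

lemma im_deriv_eq_zero_of_eventually_im_eq_zero {f : ℂ → ℂ} {x : ℝ}
    (hf : DifferentiableAt ℂ f x) (h : ∀ᶠ t : ℝ in 𝓝 x, (f t).im = 0) :
    (deriv f x).im = 0 := by
  have hderiv : HasDerivAt (fun t : ℝ => (f t).im) (deriv f x).im x :=
    imCLM.hasFDerivAt.comp_hasDerivAt x hf.hasDerivAt.comp_ofReal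
  have hzero : (fun t : ℝ => (f t).im) =ᶠ[𝓝 x] fun _ => 0 := h
  rw [← hderiv.deriv, hzero.deriv_eq, deriv_const]

lemma im_iteratedDeriv_eq_zero_of_im_eq_zero {f : ℂ → ℂ} {U : Set ℂ} (hU : IsOpen U)
    (hf : AnalyticOnNhd ℂ f U) (h : ∀ x : ℝ, (x : ℂ) ∈ U → (f x).im = 0) (n : ℕ) {x : ℝ}
    (hx : (x : ℂ) ∈ U) : (iteratedDeriv n f x).im = 0 := by
  induction n generalizing x with
  | zero => simpa using h x hx
  | succ n ih =>
    have hdiff : DifferentiableAt ℂ (iteratedDeriv n f) x := by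
      rw [iteratedDeriv_eq_iterate]
      exact (hf.iterated_deriv n x hx).differentiableAt
    rw [iteratedDeriv_succ]
    refine im_deriv_eq_zero_of_eventually_im_eq_zero hdiff ?_
    filter_upwards [continuous_ofReal.continuousAt.preimage_mem_nhds (hU.mem_nhds hx)]
      with t ht using ih ht

lemma im_partialSum_three_ofScalars_ofReal_mul_I {c : ℕ → ℂ} (hc : ∀ n, (c n).im = 0) (ε : ℝ) :
    ((FormalMultilinearSeries.ofScalars ℂ c).partialSum 3 (ε * I)).im = ε * (c 1).re := by
  simp [FormalMultilinearSeries.partialSum, Finset.sum_range_succ, mul_pow, ← ofReal_pow, hc]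

lemma isBigO_im_complex_step {f : ℂ → ℂ} {x : ℝ} (hf : AnalyticAt ℂ f x)
    (hreal : ∀ n, (iteratedDeriv n f x).im = 0) :
    (fun ε : ℝ => (f (x + ε * I)).im - ε * (deriv f x).re) =O[𝓝 0] fun ε => ε ^ 3 := by
  have hstep : Tendsto (fun ε : ℝ => (ε : ℂ) * I) (𝓝 0) (𝓝 0) := by
    simpa using (continuous_ofReal.tendsto 0).mul_const I
  have htaylor := (hf.hasFPowerSeriesAt.isBigO_sub_partialSum_pow 3).comp_tendsto hstep
  refine .trans (isBigO_of_le _ fun ε => ?_) (htaylor.trans (isBigO_of_le _ fun ε => ?_))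
  · have hpartial := im_partialSum_three_ofScalars_ofReal_mul_I
      (c := fun n => iteratedDeriv n f x / n.factorial) (by simp [hreal]) ε
    simp only [iteratedDeriv_one, Nat.factorial_one, Nat.cast_one, div_one] at hpartial
    rw [← hpartial, ← sub_im, Real.norm_eq_abs]
    exact abs_im_le_norm _
  · simp

end Complex

/-- Complex-step differentiation: if `L : ℂ → ℂ` is holomorphic on a ball around a real
point `θ` and maps real points of that ball to real values, then the complex-step quotient
`Im(L(θ + iε))/ε` approximates the derivative of the real restriction `g(x) = Re L(x)`
with second-order accuracy `O(ε²)`. -/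
theorem complex_step_differentiation_second_order
    (θ : ℝ) (L : ℂ → ℂ) (r : ℝ) (hr : 0 < r)
    (hL : DifferentiableOn ℂ L (Metric.ball (θ : ℂ) r))
    (hreal : ∀ x : ℝ, (x : ℂ) ∈ Metric.ball (θ : ℂ) r → (L x).im = 0) :
    ∃ C > (0 : ℝ), ∃ ε₀ > (0 : ℝ), ∀ ε : ℝ, 0 < ε → ε < ε₀ →
      |(L (θ + ε * Complex.I)).im / ε - deriv (fun x : ℝ => (L x).re) θ| ≤ C * ε ^ 2 := by
  have hθ : (θ : ℂ) ∈ ball (θ : ℂ) r := mem_ball_self hr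
  have hA : AnalyticAt ℂ L θ := hL.analyticOnNhd isOpen_ball θ hθ
  have hderiv : deriv (fun x : ℝ => (L x).re) θ = (deriv L θ).re :=
    hA.differentiableAt.hasDerivAt.real_of_complex.deriv
  obtain ⟨C, hC, ε₀, hε₀, hbound⟩ := (isBigO_im_complex_step hA fun n =>
    im_iteratedDeriv_eq_zero_of_im_eq_zero isOpen_ball (hL.analyticOnNhd isOpen_ball) hreal n hθ
    ).exists_pos_forall_norm_le
  refine ⟨C, hC, ε₀, hε₀, fun ε hε hεε₀ => ?_⟩
  have hεbound := hbound ε (by rwa [Real.norm_eq_abs, abs_of_pos hε])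
  simp only [Real.norm_eq_abs, abs_pow, abs_of_pos hε] at hεbound
  rw [hderiv, div_sub' hε.ne', abs_div, abs_of_pos hε, div_le_iff₀ hε]
  calc _ ≤ C * ε ^ 3 := hεbound
    _ = C * ε ^ 2 * ε := by ring
end

section
/- Let f : ℝ^n × ℝ^p × ℝ → ℝ^n and h : ℝ^n × ℝ^p → ℝ be continuously differentiable. Fix θ ∈ ℝ^p, let u : [t₀, t₁] → ℝ^n be continuously differentiable with u'(t) = f(u(t), θ, t), let s : [t₀, t₁] → ℝ^{n×p} be continuously differentiable with s'(t) = (∂f/∂u)(u(t), θ, t) s(t) + (∂f/∂θ)(u(t), θ, t), and let the adjoint λ : [t₀, t₁] → ℝ^n be continuously differentiable with dλ/dt = −(∂f/∂u)(u(t), θ, t)ᵀ λ(t) − (∂h/∂u)(u(t), θ)ᵀ and final condition λ(t₁) = 0. Then ∫_{t₀}^{t₁} (∂h/∂u)(u(t), θ) s(t) dt = λ(t₀)ᵀ s(t₀) + ∫_{t₀}^{t₁} λ(t)ᵀ (∂f/∂θ)(u(t), θ, t) dt. In particular, if L(θ) = ∫_{t₀}^{t₁} h(u(t; θ), θ) dt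 is differentiable at θ with dL/dθ = ∫_{t₀}^{t₁} ( ∂h/∂θ + (∂h/∂u) s(t) ) dt (differentiation under the integral sign), then dL/dθ = λ(t₀)ᵀ s(t₀) + ∫_{t₀}^{t₁} ( ∂h/∂θ + λ(t)ᵀ ∂f/∂θ ) dt. -/
open Matrix MeasureTheory intervalIntegral

/-!
Along the trajectory, `d/dt (λᵀ s) = λ'ᵀ s + λᵀ s' = -(Aᵀλ + g)ᵀ s + λᵀ (A s + B) = λᵀ B - g s`:
the adjoint equation is chosen exactly so that the terms involving `A = ∂f/∂u` cancel.
Integrating from `t₀` to `t₁` and using `λ(t₁) = 0` gives the first identity, and the gradient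
formula follows by adding `∫ ∂h/∂θ` to both sides. The fundamental theorem of calculus applies
because all integrands are continuous, `f` and `h` being `C¹` along the continuous curve `u`.
-/

section Continuity

variable {X : Type*} [TopologicalSpace X] {S : Set X} {m n : Type*} [Fintype m]

theorem ContinuousOn.matrix_vecMul {x : X → m → ℝ} {M : X → Matrix m n ℝ}
    (hx : ContinuousOn x S) (hM : ContinuousOn M S) :
    ContinuousOn (fun t => x t ᵥ* M t) S := by
  rw [continuousOn_iff_continuous_domRestrict] at *
  exact hx.matrix_vecMul hM

theorem ContDiff.continuousOn_fderiv_comp {E P G : Type*} [NormedAddCommGroup E]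
    [NormedSpace ℝ E] [NormedAddCommGroup P] [NormedSpace ℝ P] [NormedAddCommGroup G]
    [NormedSpace ℝ G] {Φ : E → G} (hΦ : ContDiff ℝ 1 Φ) {ι : X → P → E} {L : P →L[ℝ] E}
    {x : X → P} (hι : ∀ t, HasFDerivAt (ι t) L (x t))
    (hγ : ContinuousOn (fun t => ι t (x t)) S) :
    ContinuousOn (fun t => fderiv ℝ (fun w => Φ (ι t w)) (x t)) S := by
  have hchain : ∀ t, fderiv ℝ (fun w => Φ (ι t w)) (x t) = (fderiv ℝ Φ (ι t (x t))).comp L :=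
    fun t => ((hΦ.differentiable one_ne_zero _).hasFDerivAt.comp (x t) (hι t)).fderiv
  simp_rw [hchain]
  exact ((hΦ.continuous_fderiv one_ne_zero).comp_continuousOn hγ).clm_comp continuousOn_const

variable [Fintype n]

theorem continuousOn_of_mulVec_eq {M : X → Matrix m n ℝ} {D : X → (n → ℝ) →L[ℝ] (m → ℝ)}
    (hD : ContinuousOn D S) (hM : ∀ t ∈ S, ∀ v, M t *ᵥ v = D t v) : ContinuousOn M S := by
  classical
  refine continuousOn_pi.2 fun i => continuousOn_pi.2 fun j => ?_
  have hcol : ContinuousOn (fun t => D t (Pi.single j 1)) S := hD.clm_apply continuousOn_const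
  refine ((continuous_apply i).comp_continuousOn hcol).congr fun t ht => ?_
  simp only [Function.comp_apply, ← hM t ht, mulVec_single_one]
  rfl

theorem continuousOn_of_apply_single_eq [DecidableEq n] {x : X → n → ℝ}
    {D : X → (n → ℝ) →L[ℝ] ℝ} (hD : ContinuousOn D S)
    (hx : ∀ t ∈ S, ∀ i, x t i = D t (Pi.single i 1)) :
    ContinuousOn x S :=
  continuousOn_pi.2 fun i => (hD.clm_apply continuousOn_const).congr fun t ht => hx t ht i

end Continuity

theorem HasDerivAt.vecMul {𝕜 : Type*} [NontriviallyNormedField 𝕜] {m n : Type*} [Fintype m]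
    {x : 𝕜 → m → 𝕜} {M : 𝕜 → Matrix m n 𝕜} {x' : m → 𝕜} {M' : Matrix m n 𝕜} {t : 𝕜}
    (hx : HasDerivAt x x' t) (hM : ∀ i j, HasDerivAt (fun τ => M τ i j) (M' i j) t) :
    HasDerivAt (fun τ => x τ ᵥ* M τ) (x' ᵥ* M t + x t ᵥ* M') t :=
  hasDerivAt_pi.2 fun j =>
    (HasDerivAt.fun_sum fun i _ => (hasDerivAt_pi.1 hx i).fun_mul (hM i j)).congr_deriv
      Finset.sum_add_distrib

theorem integral_vecMul_eq_of_adjoint {m n : Type*} [Fintype m] [Fintype n] {a b : ℝ}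
    (hab : a ≤ b) {A : ℝ → Matrix m m ℝ} {B s : ℝ → Matrix m n ℝ} {g lam : ℝ → m → ℝ}
    (hs : ∀ t ∈ Set.Icc a b, ∀ i j, HasDerivAt (fun τ => s τ i j) ((A t * s t + B t) i j) t)
    (hlam : ∀ t ∈ Set.Icc a b, HasDerivAt lam (-((A t)ᵀ *ᵥ lam t) - g t) t)
    (hlamb : lam b = 0)
    (hgs : IntervalIntegrable (fun t => g t ᵥ* s t) volume a b)
    (hlamB : IntervalIntegrable (fun t => lam t ᵥ* B t) volume a b) :
    ∫ t in a..b, g t ᵥ* s t = lam a ᵥ* s a + ∫ t in a..b, lam t ᵥ* B t := by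
  have hderiv : ∀ t ∈ Set.uIcc a b,
      HasDerivAt (fun τ => lam τ ᵥ* s τ) (lam t ᵥ* B t - g t ᵥ* s t) t := by
    intro t ht
    rw [Set.uIcc_of_le hab] at ht
    refine ((hlam t ht).vecMul (hs t ht)).congr_deriv ?_
    rw [mulVec_transpose, sub_vecMul, neg_vecMul, vecMul_vecMul, vecMul_add]
    abel
  have hFTC := integral_eq_sub_of_hasDerivAt hderiv (hlamB.sub hgs)
  rw [integral_sub hlamB hgs, hlamb, zero_vecMul] at hFTC
  linear_combination -hFTC

theorem continuous_adjoint_gradient_general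
    (n p : ℕ) (t₀ t₁ : ℝ) (h01 : t₀ ≤ t₁)
    (f : (Fin n → ℝ) → (Fin p → ℝ) → ℝ → (Fin n → ℝ))
    (h : (Fin n → ℝ) → (Fin p → ℝ) → ℝ) (θ : Fin p → ℝ)
    (hf : ContDiff ℝ 1 (fun q : (Fin n → ℝ) × (Fin p → ℝ) × ℝ => f q.1 q.2.1 q.2.2))
    (hh : ContDiff ℝ 1 (fun q : (Fin n → ℝ) × (Fin p → ℝ) => h q.1 q.2))
    (u : ℝ → Fin n → ℝ)
    (hu : ∀ t ∈ Set.Icc t₀ t₁, HasDerivAt u (f (u t) θ t) t)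
    -- `A t` is the partial Jacobian `∂f/∂u (u(t), θ, t)`
    (A : ℝ → Matrix (Fin n) (Fin n) ℝ)
    -- `B t` is the partial Jacobian `∂f/∂θ (u(t), θ, t)`
    (B : ℝ → Matrix (Fin n) (Fin p) ℝ)
    (hB : ∀ t ∈ Set.Icc t₀ t₁, ∀ v, B t *ᵥ v = fderiv ℝ (fun w => f (u t) w t) θ v)
    -- `g t` is the gradient row vector `∂h/∂u (u(t), θ)`
    (g : ℝ → Fin n → ℝ)
    (hg : ∀ t ∈ Set.Icc t₀ t₁, ∀ i,
      g t i = fderiv ℝ (fun w => h w θ) (u t) (Pi.single i 1 : Fin n → ℝ))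
    -- `gθ t` is the gradient row vector `∂h/∂θ (u(t), θ)`
    (gθ : ℝ → Fin p → ℝ)
    (hgθ : ∀ t ∈ Set.Icc t₀ t₁, ∀ j,
      gθ t j = fderiv ℝ (fun w => h (u t) w) θ (Pi.single j 1 : Fin p → ℝ))
    -- the sensitivity `s` solves the forward sensitivity equation
    (s : ℝ → Matrix (Fin n) (Fin p) ℝ)
    (hs : ∀ t ∈ Set.Icc t₀ t₁, ∀ i j, HasDerivAt (fun τ => s τ i j) ((A t * s t + B t) i j) t)
    -- the adjoint `λ` solves `λ' = −(∂f/∂u)ᵀ λ − (∂h/∂u)ᵀ`, `λ(t₁) = 0`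
    (lam : ℝ → Fin n → ℝ)
    (hlam : ∀ t ∈ Set.Icc t₀ t₁, HasDerivAt lam (-((A t)ᵀ *ᵥ lam t) - g t) t)
    (hlam1 : lam t₁ = 0) :
    (∫ t in t₀..t₁, g t ᵥ* s t)
        = lam t₀ ᵥ* s t₀ + ∫ t in t₀..t₁, lam t ᵥ* B t
      ∧ ∀ dL : Fin p → ℝ,
          dL = (∫ t in t₀..t₁, (gθ t + g t ᵥ* s t)) →
          dL = lam t₀ ᵥ* s t₀ + ∫ t in t₀..t₁, (gθ t + lam t ᵥ* B t) := by
  have hu_cont : ContinuousOn u (Set.Icc t₀ t₁) := HasDerivAt.continuousOn hu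
  have hs_cont : ContinuousOn s (Set.Icc t₀ t₁) := continuousOn_pi.2 fun i =>
    continuousOn_pi.2 fun j => HasDerivAt.continuousOn fun t ht => hs t ht i j
  have hfθ_cont : ContinuousOn (fun t => fderiv ℝ (fun w => f (u t) w t) θ) (Set.Icc t₀ t₁) :=
    hf.continuousOn_fderiv_comp
      (fun t => (hasFDerivAt_prodMk_right (u t) (θ, t)).comp θ (hasFDerivAt_prodMk_left θ t))
      (hu_cont.prodMk (continuousOn_const.prodMk continuousOn_id))
  have hhu_cont : ContinuousOn (fun t => fderiv ℝ (fun w => h w θ) (u t)) (Set.Icc t₀ t₁) :=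
    hh.continuousOn_fderiv_comp (fun t => hasFDerivAt_prodMk_left (u t) θ)
      (hu_cont.prodMk continuousOn_const)
  have hhθ_cont : ContinuousOn (fun t => fderiv ℝ (fun w => h (u t) w) θ) (Set.Icc t₀ t₁) :=
    hh.continuousOn_fderiv_comp (fun t => hasFDerivAt_prodMk_right (u t) θ)
      (hu_cont.prodMk continuousOn_const)
  have hgs := ((continuousOn_of_apply_single_eq hhu_cont hg).matrix_vecMul
    hs_cont).intervalIntegrable_of_Icc (μ := volume) h01
  have hlamB := ((HasDerivAt.continuousOn hlam).matrix_vecMul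
    (continuousOn_of_mulVec_eq hfθ_cont hB)).intervalIntegrable_of_Icc (μ := volume) h01
  have hgθ := (continuousOn_of_apply_single_eq hhθ_cont hgθ).intervalIntegrable_of_Icc
    (μ := volume) h01
  have hadjoint := integral_vecMul_eq_of_adjoint h01 hs hlam hlam1 hgs hlamB
  refine ⟨hadjoint, fun dL hdL => ?_⟩
  rw [hdL, integral_add hgθ hgs, integral_add hgθ hlamB, hadjoint]
  abel

/-- The continuous adjoint method: if `u` solves `u' = f(u, θ, t)`, the sensitivity `s`
solves the forward sensitivity equation, and the adjoint `λ` solves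
`λ' = −(∂f/∂u)ᵀ λ − (∂h/∂u)ᵀ` with `λ(t₁) = 0`, then
`∫ (∂h/∂u) s dt = λ(t₀)ᵀ s(t₀) + ∫ λᵀ (∂f/∂θ) dt`; in particular, if
`dL/dθ = ∫ (∂h/∂θ + (∂h/∂u) s) dt` then
`dL/dθ = λ(t₀)ᵀ s(t₀) + ∫ (∂h/∂θ + λᵀ ∂f/∂θ) dt`. -/
theorem continuous_adjoint_gradient
    (n p : ℕ) (t₀ t₁ : ℝ) (h01 : t₀ ≤ t₁)
    (f : (Fin n → ℝ) → (Fin p → ℝ) → ℝ → (Fin n → ℝ))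
    (h : (Fin n → ℝ) → (Fin p → ℝ) → ℝ) (θ : Fin p → ℝ)
    (hf : ContDiff ℝ 1 (fun q : (Fin n → ℝ) × (Fin p → ℝ) × ℝ => f q.1 q.2.1 q.2.2))
    (hh : ContDiff ℝ 1 (fun q : (Fin n → ℝ) × (Fin p → ℝ) => h q.1 q.2))
    (u : ℝ → Fin n → ℝ)
    (hu : ∀ t ∈ Set.Icc t₀ t₁, HasDerivAt u (f (u t) θ t) t)
    -- `A t` is the partial Jacobian `∂f/∂u (u(t), θ, t)`
    (A : ℝ → Matrix (Fin n) (Fin n) ℝ)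
    (hA : ∀ t ∈ Set.Icc t₀ t₁, ∀ v, A t *ᵥ v = fderiv ℝ (fun w => f w θ t) (u t) v)
    -- `B t` is the partial Jacobian `∂f/∂θ (u(t), θ, t)`
    (B : ℝ → Matrix (Fin n) (Fin p) ℝ)
    (hB : ∀ t ∈ Set.Icc t₀ t₁, ∀ v, B t *ᵥ v = fderiv ℝ (fun w => f (u t) w t) θ v)
    -- `g t` is the gradient row vector `∂h/∂u (u(t), θ)`
    (g : ℝ → Fin n → ℝ)
    (hg : ∀ t ∈ Set.Icc t₀ t₁, ∀ i,
      g t i = fderiv ℝ (fun w => h w θ) (u t) (Pi.single i 1 : Fin n → ℝ))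
    -- `gθ t` is the gradient row vector `∂h/∂θ (u(t), θ)`
    (gθ : ℝ → Fin p → ℝ)
    (hgθ : ∀ t ∈ Set.Icc t₀ t₁, ∀ j,
      gθ t j = fderiv ℝ (fun w => h (u t) w) θ (Pi.single j 1 : Fin p → ℝ))
    -- the sensitivity `s` solves the forward sensitivity equation
    (s : ℝ → Matrix (Fin n) (Fin p) ℝ)
    (hs : ∀ t ∈ Set.Icc t₀ t₁, ∀ i j, HasDerivAt (fun τ => s τ i j) ((A t * s t + B t) i j) t)
    -- the adjoint `λ` solves `λ' = −(∂f/∂u)ᵀ λ − (∂h/∂u)ᵀ`, `λ(t₁) = 0`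
    (lam : ℝ → Fin n → ℝ)
    (hlam : ∀ t ∈ Set.Icc t₀ t₁, HasDerivAt lam (-((A t)ᵀ *ᵥ lam t) - g t) t)
    (hlam1 : lam t₁ = 0) :
    (∫ t in t₀..t₁, g t ᵥ* s t)
        = lam t₀ ᵥ* s t₀ + ∫ t in t₀..t₁, lam t ᵥ* B t
      ∧ ∀ dL : Fin p → ℝ,
          dL = (∫ t in t₀..t₁, (gθ t + g t ᵥ* s t)) →
          dL = lam t₀ ᵥ* s t₀ + ∫ t in t₀..t₁, (gθ t + lam t ᵥ* B t) :=
  continuous_adjoint_gradient_general n p t₀ t₁ h01 f h θ hf hh u hu A B hB g hg gθ hgθ s hs lam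
    hlam hlam1
end

section
/- Let g_m : ℝ^n × ℝ^p → ℝ^n for m = 0, …, M−1 be differentiable maps, fix an initial state u⁰ ∈ ℝ^n, and for θ ∈ ℝ^p define iterates u^{m+1}(θ) = g_m(u^m(θ), θ) with u^0(θ) = u⁰. Let L : (ℝ^n)^M → ℝ be differentiable as a function of (u¹, …, u^M). Define adjoint vectors backward by λ_M = (∂L/∂u^M)ᵀ and λ_m = (∂g_m/∂u)(u^m(θ), θ)ᵀ λ_{m+1} + (∂L/∂u^m)ᵀ for m = M−1, …, 1, with partial derivatives of L evaluated at (u¹(θ), …, u^M(θ)). Then θ ↦ L(u¹(θ), …, u^M(θ)) is differentiable and its gradient equals Σ_{m=0}^{M−1} (∂g_m/∂θ)(u^m(θ), θ)ᵀ λ_{m+1}; i.e., the reverse-mode (discrete adjoint / backpropagation) recursion computes the exact gradient of the loss through an explicit one-step scheme. -/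
open Matrix

/-- The iterates `u⁰ , u^{m+1} = g_m(u^m, θ)` of an explicit one-step scheme. -/
def solverIterate (n p : ℕ) (g : ℕ → (Fin n → ℝ) → (Fin p → ℝ) → (Fin n → ℝ))
    (u0 : Fin n → ℝ) (θ : Fin p → ℝ) : ℕ → (Fin n → ℝ)
  | 0 => u0
  | (m + 1) => g m (solverIterate n p g u0 θ m) θ

/-! Differentiating the scheme along a direction `e` of parameter space gives the tangent
recursion `v_{m+1} = A_m v_m + b_m`, `v_0 = 0`, with `A_m = ∂g_m/∂u` and `b_m = (∂g_m/∂θ) e`,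
and the directional derivative of the loss is `∑_k ℓ_k (v_{k+1})` with `ℓ_k = ∂L/∂u^{k+1}`.
The adjoint recursion `λ_k = λ_{k+1} ∘ A_{k+1} + ℓ_k` is exactly what makes this sum telescope
into `∑_k λ_k (b_k)`. -/

theorem Matrix.dotProductEquiv_eq_iff {R ι : Type*} [CommSemiring R] [Fintype ι] [DecidableEq ι]
    {x : ι → R} {f : Module.Dual R (ι → R)} :
    dotProductEquiv R ι x = f ↔ ∀ i, x i = f (Pi.single i 1) := by
  rw [← LinearEquiv.eq_symm_apply, funext_iff]
  rfl

section Adjoint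

variable {R V : Type*} [CommRing R] [AddCommGroup V] [Module R V]

/-- Both sides equal `∑ λ_k (v_{k+1}) - ∑ λ_k (A_k v_k)`. -/
theorem sum_cost_tangent_eq_sum_adjoint_forcing {N : ℕ} (A : ℕ → V →ₗ[R] V) (v b : ℕ → V)
    (ell lam : Fin (N + 1) → Module.Dual R V) (hv0 : v 0 = 0)
    (hv : ∀ m < N + 1, v (m + 1) = A m (v m) + b m)
    (hlam_last : lam (Fin.last N) = ell (Fin.last N))
    (hlam : ∀ k : Fin N, lam k.castSucc = lam k.succ ∘ₗ A (k + 1) + ell k.castSucc) :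
    ∑ k, ell k (v (k + 1)) = ∑ k, lam k (b k) := by
  have hb : ∀ k : Fin (N + 1), lam k (b k) = lam k (v (k + 1)) - lam k (A k (v k)) := by
    intro k
    rw [hv k k.isLt, map_add]
    ring
  have hell : ∀ k : Fin N, ell k.castSucc (v (k + 1))
      = lam k.castSucc (v (k + 1)) - lam k.succ (A (k + 1) (v (k + 1))) := by
    intro k
    rw [hlam k]
    simp
  rw [Finset.sum_congr rfl fun k _ => hb k, Finset.sum_sub_distrib,
    Fin.sum_univ_castSucc (fun k => ell k _), Fin.sum_univ_castSucc (fun k => lam k (v (k + 1))),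
    Fin.sum_univ_succ (fun k => lam k (A k (v k)))]
  simp only [Fin.val_castSucc, Fin.val_succ, Fin.val_zero, hell, hlam_last, hv0, map_zero,
    Finset.sum_sub_distrib]
  ring

end Adjoint

section Calculus

variable {𝕜 E F G : Type*} [NontriviallyNormedField 𝕜] [NormedAddCommGroup E] [NormedSpace 𝕜 E]
  [NormedAddCommGroup F] [NormedSpace 𝕜 F] [NormedAddCommGroup G] [NormedSpace 𝕜 G]

theorem fderiv_comp_graph_apply {Φ : E → F → G} {f : F → E} {x : F}
    (hΦ : DifferentiableAt 𝕜 (fun q : E × F => Φ q.1 q.2) (f x, x))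
    (hf : DifferentiableAt 𝕜 f x) (e : F) :
    fderiv 𝕜 (fun y => Φ (f y) y) x e
      = fderiv 𝕜 (fun u => Φ u x) (f x) (fderiv 𝕜 f x e) + fderiv 𝕜 (fun y => Φ (f x) y) x e := by
  have hΦ' := hΦ.hasFDerivAt
  have hgraph :=
    (hΦ'.comp (f := fun y => (f y, y)) x (hf.hasFDerivAt.prodMk (hasFDerivAt_id x))).fderiv
  have hfst := (hΦ'.comp (f := fun u => (u, x)) (f x) (hasFDerivAt_prodMk_left (f x) x)).fderiv
  have hsnd := (hΦ'.comp (f := fun y => (f x, y)) x (hasFDerivAt_prodMk_right (f x) x)).fderiv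
  simp only [Function.comp_def] at hgraph hfst hsnd
  rw [hgraph, hfst, hsnd]
  exact ((fderiv 𝕜 (fun q : E × F => Φ q.1 q.2) (f x, x)).comp_inl_add_comp_inr _).symm

theorem fderiv_comp_pi_apply_eq_sum {ι : Type*} [Fintype ι] [DecidableEq ι] {L : (ι → E) → G}
    {φ : F → ι → E} {x : F} (hL : DifferentiableAt 𝕜 L (φ x))
    (hφ : ∀ i, DifferentiableAt 𝕜 (fun y => φ y i) x) (e : F) :
    fderiv 𝕜 (fun y => L (φ y)) x e
      = ∑ i, (fderiv 𝕜 L (φ x)).comp (.single 𝕜 (fun _ => E) i) (fderiv 𝕜 (fun y => φ y i) x e) := by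
  rw [fderiv_fun_comp x hL (differentiableAt_pi.2 hφ), ContinuousLinearMap.comp_apply,
    ← ContinuousLinearMap.sum_comp_single, fderiv_pi hφ]
  rfl

end Calculus

theorem differentiable_solverIterate {n p M : ℕ} {g : ℕ → (Fin n → ℝ) → (Fin p → ℝ) → (Fin n → ℝ)}
    (hg : ∀ m < M, Differentiable ℝ (fun q : (Fin n → ℝ) × (Fin p → ℝ) => g m q.1 q.2))
    (u0 : Fin n → ℝ) {m : ℕ} (hm : m ≤ M) :
    Differentiable ℝ (fun θ => solverIterate n p g u0 θ m) := by
  induction m with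
  | zero => exact differentiable_const u0
  | succ m ih =>
    exact (hg m hm).comp ((ih (Nat.le_of_succ_le hm)).prodMk differentiable_id)

/-- The reverse-mode (discrete adjoint / backpropagation) recursion computes the exact
gradient of a differentiable loss `L(u¹, …, u^M)` through an explicit one-step scheme
`u^{m+1} = g_m(u^m, θ)`: with adjoints defined backwards by `λ_M = (∂L/∂u^M)ᵀ` and
`λ_m = (∂g_m/∂u)ᵀ λ_{m+1} + (∂L/∂u^m)ᵀ`, the map `θ ↦ L(u¹(θ), …, u^M(θ))` is
differentiable with gradient `Σ_{m=0}^{M−1} (∂g_m/∂θ)ᵀ λ_{m+1}`. -/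
theorem reverse_mode_discrete_adjoint_gradient
    (n p M : ℕ) (hM : 0 < M)
    (g : ℕ → (Fin n → ℝ) → (Fin p → ℝ) → (Fin n → ℝ))
    (hg : ∀ m < M, Differentiable ℝ (fun q : (Fin n → ℝ) × (Fin p → ℝ) => g m q.1 q.2))
    (u0 : Fin n → ℝ) (θ : Fin p → ℝ)
    (L : (Fin M → Fin n → ℝ) → ℝ)
    (hL : Differentiable ℝ L)
    -- the adjoint vectors: `lam k` is `λ_{k+1}`, i.e. the adjoint of `u^{k+1}`
    (lam : Fin M → Fin n → ℝ)
    (hlamM : ∀ i, lam ⟨M - 1, by omega⟩ i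
      = fderiv ℝ L (fun j : Fin M => solverIterate n p g u0 θ ((j : ℕ) + 1))
          (Pi.single (⟨M - 1, by omega⟩ : Fin M) (Pi.single i 1 : Fin n → ℝ)))
    (hlamRec : ∀ k : Fin M, ∀ hk : (k : ℕ) + 1 < M, ∀ i,
      lam k i
        = lam ⟨(k : ℕ) + 1, hk⟩ ⬝ᵥ
            (fderiv ℝ (fun v => g ((k : ℕ) + 1) v θ)
              (solverIterate n p g u0 θ ((k : ℕ) + 1)) (Pi.single i 1 : Fin n → ℝ))
          + fderiv ℝ L (fun j : Fin M => solverIterate n p g u0 θ ((j : ℕ) + 1))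
              (Pi.single k (Pi.single i 1 : Fin n → ℝ))) :
    Differentiable ℝ
        (fun θ' => L (fun j : Fin M => solverIterate n p g u0 θ' ((j : ℕ) + 1)))
      ∧ ∀ jp : Fin p,
          fderiv ℝ (fun θ' => L (fun j : Fin M => solverIterate n p g u0 θ' ((j : ℕ) + 1)))
              θ (Pi.single jp 1 : Fin p → ℝ)
            = ∑ k : Fin M, lam k ⬝ᵥ
                (fderiv ℝ (fun θ' => g (k : ℕ) (solverIterate n p g u0 θ (k : ℕ)) θ') θ
                  (Pi.single jp 1 : Fin p → ℝ)) := by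
  obtain ⟨N, rfl⟩ : ∃ N, M = N + 1 := ⟨M - 1, by omega⟩
  have hu {m : ℕ} (hm : m ≤ N + 1) := differentiable_solverIterate hg u0 hm
  have hφ (j : Fin (N + 1)) := hu (m := j + 1) j.isLt
  refine ⟨hL.comp (differentiable_pi.2 hφ), fun jp => ?_⟩
  rw [fderiv_comp_pi_apply_eq_sum (hL _) (fun j => hφ j θ)]
  refine sum_cost_tangent_eq_sum_adjoint_forcing
    (fun m => fderiv ℝ (fun v => g m v θ) (solverIterate n p g u0 θ m))
    (fun m => fderiv ℝ (fun θ' => solverIterate n p g u0 θ' m) θ (Pi.single jp 1))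
    (fun m => fderiv ℝ (fun θ' => g m (solverIterate n p g u0 θ m) θ') θ (Pi.single jp 1))
    (fun k => ((fderiv ℝ L _).comp (.single ℝ (fun _ => Fin n → ℝ) k)).toLinearMap)
    (fun k => dotProductEquiv ℝ (Fin n) (lam k)) ?_ ?_ ?_ ?_
  · simp [solverIterate]
  · exact fun m hm => fderiv_comp_graph_apply (hg m hm _) (hu hm.le θ) _
  · exact dotProductEquiv_eq_iff.2 hlamM
  · exact fun k => dotProductEquiv_eq_iff.2 (hlamRec k.castSucc (by simp))
end

section
/- Let f : ℝ^n × ℝ^p × ℝ → ℝ^n be continuously differentiable and fix an explicit σ-stage Runge–Kutta scheme with coefficients a_{ij} (1 ≤ i, j ≤ σ, with a_{ij} = 0 for j ≥ i), weights b_i, nodes c_i, stepsize Δt > 0 and time t_m. Let u^m : ℝ^p → ℝ^n be differentiable with derivative s^m := D_θ u^m(θ), define the stages k_i(θ) = f( u^m(θ) + Σ_{j<i} a_{ij} k_j(θ), θ, t_m + c_i Δt ) for i = 1, …, σ, and u^{m+1}(θ) = u^m(θ) + Δt Σ_{i=1}^σ b_i k_i(θ). Then each k_i is differentiable, and its derivative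 k̇_i := D_θ k_i(θ) ∈ ℝ^{n×p} satisfies k̇_i = (∂f/∂u)( u^m + Σ_{j<i} a_{ij} k_j, θ, t_m + c_i Δt ) ( s^m + Σ_{j<i} a_{ij} k̇_j ) + (∂f/∂θ)( u^m + Σ_{j<i} a_{ij} k_j, θ, t_m + c_i Δt ), and D_θ u^{m+1}(θ) = s^m + Δt Σ_{i=1}^σ b_i k̇_i; that is, forward-mode differentiation of the explicit Runge–Kutta step yields exactly the same Runge–Kutta scheme applied to the forward sensitivity equation. -/
/-!
Each stage is `θ ↦ f (g θ) θ t` where `g = u^m + Σ_{j<i} a_{ij} k_j` involves only earlier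
stages, so strong induction on `i` gives the differentiability of `g` together with the formula
`Dg = s^m + Σ_{j<i} a_{ij} k̇_j`. The chain rule for a jointly differentiable function of two
arguments splits the derivative of the stage into `∂_u f ∘ Dg + ∂_θ f`. The update is linear
in the stages, so its derivative is the same linear combination of the `k̇_i`.
-/

/-- The stages `k_i(θ) = f(u^m(θ) + Σ_{j<i} a_{ij} k_j(θ), θ, t_m + c_i Δt)` of an
explicit Runge–Kutta step, as functions of the parameter `θ`. -/
noncomputable def rkStage (n p : ℕ)
    (f : (Fin n → ℝ) → (Fin p → ℝ) → ℝ → (Fin n → ℝ))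
    (a : ℕ → ℕ → ℝ) (c : ℕ → ℝ) (Δt tm : ℝ)
    (um : (Fin p → ℝ) → (Fin n → ℝ)) (θ : Fin p → ℝ) : ℕ → (Fin n → ℝ)
  | i => f (um θ + ∑ j ∈ (Finset.range i).attach,
        a i (j : ℕ) • rkStage n p f a c Δt tm um θ (j : ℕ)) θ (tm + c i * Δt)
  termination_by i => i
  decreasing_by exact Finset.mem_range.mp j.2

lemma rkStage_def (n p : ℕ)
    (f : (Fin n → ℝ) → (Fin p → ℝ) → ℝ → (Fin n → ℝ))
    (a : ℕ → ℕ → ℝ) (c : ℕ → ℝ) (Δt tm : ℝ)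
    (um : (Fin p → ℝ) → (Fin n → ℝ)) (θ : Fin p → ℝ) (i : ℕ) :
    rkStage n p f a c Δt tm um θ i
      = f (um θ + ∑ j ∈ Finset.range i, a i j • rkStage n p f a c Δt tm um θ j) θ
          (tm + c i * Δt) := by
  rw [rkStage, ← Finset.sum_attach (Finset.range i)
    (fun j => a i j • rkStage n p f a c Δt tm um θ j)]

section PartialDerivatives

variable {𝕜 E X Y : Type*} [NontriviallyNormedField 𝕜]
  [NormedAddCommGroup E] [NormedSpace 𝕜 E] [NormedAddCommGroup X] [NormedSpace 𝕜 X]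
  [NormedAddCommGroup Y] [NormedSpace 𝕜 Y]

theorem HasFDerivAt.comp_partial_add_partial {F : X → E → Y} {g : E → X} {G : E →L[𝕜] X}
    {θ : E} (hF : DifferentiableAt 𝕜 (Function.uncurry F) (g θ, θ)) (hg : HasFDerivAt g G θ) :
    HasFDerivAt (fun θ' => F (g θ') θ')
      ((fderiv 𝕜 (fun v => F v θ) (g θ)).comp G + fderiv 𝕜 (F (g θ)) θ) θ := by
  set L := fderiv 𝕜 (Function.uncurry F) (g θ, θ)
  have hL : HasFDerivAt (Function.uncurry F) L (g θ, θ) := hF.hasFDerivAt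
  have h₁ : fderiv 𝕜 (fun v => F v θ) (g θ) = L.comp (.inl 𝕜 X E) :=
    (hL.comp (f := (·, θ)) (g θ) (hasFDerivAt_prodMk_left (g θ) θ)).fderiv
  have h₂ : fderiv 𝕜 (F (g θ)) θ = L.comp (.inr 𝕜 X E) :=
    (hL.comp (f := (g θ, ·)) θ (hasFDerivAt_prodMk_right (g θ) θ)).fderiv
  have hsplit : (L.comp (.inl 𝕜 X E)).comp G + L.comp (.inr 𝕜 X E)
      = L.comp (G.prod (.id 𝕜 E)) := by
    ext w
    exact L.comp_inl_add_comp_inr (G w, w)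
  rw [h₁, h₂, hsplit]
  exact hL.comp (f := fun θ' => (g θ', θ')) θ (hg.prodMk (hasFDerivAt_id θ))

end PartialDerivatives

section RungeKutta

variable {n p : ℕ} {f : (Fin n → ℝ) → (Fin p → ℝ) → ℝ → (Fin n → ℝ)}
  {a : ℕ → ℕ → ℝ} {c : ℕ → ℝ} {Δt tm : ℝ} {um : (Fin p → ℝ) → (Fin n → ℝ)} {θ : Fin p → ℝ}

theorem hasFDerivAt_rkStage
    (hf : Differentiable ℝ (fun q : (Fin n → ℝ) × (Fin p → ℝ) × ℝ => f q.1 q.2.1 q.2.2))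
    (hum : DifferentiableAt ℝ um θ) (i : ℕ) :
    HasFDerivAt (fun θ' => rkStage n p f a c Δt tm um θ' i)
      ((fderiv ℝ (fun v => f v θ (tm + c i * Δt))
            (um θ + ∑ j ∈ Finset.range i, a i j • rkStage n p f a c Δt tm um θ j)).comp
          (fderiv ℝ um θ + ∑ j ∈ Finset.range i,
            a i j • fderiv ℝ (fun θ' => rkStage n p f a c Δt tm um θ' j) θ)
        + fderiv ℝ (fun θ' => f (um θ + ∑ j ∈ Finset.range i,
            a i j • rkStage n p f a c Δt tm um θ j) θ' (tm + c i * Δt)) θ) θ := by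
  induction i using Nat.strong_induction_on with
  | _ i ih =>
    have hg : HasFDerivAt
        (fun θ' => um θ' + ∑ j ∈ Finset.range i, a i j • rkStage n p f a c Δt tm um θ' j)
        (fderiv ℝ um θ + ∑ j ∈ Finset.range i,
          a i j • fderiv ℝ (fun θ' => rkStage n p f a c Δt tm um θ' j) θ) θ :=
      hum.hasFDerivAt.add <| HasFDerivAt.fun_sum fun j hj =>
        (ih j (Finset.mem_range.mp hj)).differentiableAt.hasFDerivAt.const_smul (a i j)
    have hF : ∀ t x, DifferentiableAt ℝ (Function.uncurry fun v θ' => f v θ' t) x :=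
      fun t x => by fun_prop
    simp_rw [rkStage_def n p f a c Δt tm um _ i]
    exact HasFDerivAt.comp_partial_add_partial (hF _ _) hg

end RungeKutta

theorem forward_AD_runge_kutta_consistency_general
    (n p σ : ℕ)
    (f : (Fin n → ℝ) → (Fin p → ℝ) → ℝ → (Fin n → ℝ))
    (hf : ContDiff ℝ 1 (fun q : (Fin n → ℝ) × (Fin p → ℝ) × ℝ => f q.1 q.2.1 q.2.2))
    (a : ℕ → ℕ → ℝ) (b : ℕ → ℝ) (c : ℕ → ℝ) (Δt : ℝ) (tm : ℝ)
    (um : (Fin p → ℝ) → (Fin n → ℝ)) (hum : Differentiable ℝ um) (θ : Fin p → ℝ) :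
    (∀ i : ℕ, DifferentiableAt ℝ (fun θ' => rkStage n p f a c Δt tm um θ' i) θ)
      ∧ (∀ i : ℕ,
          fderiv ℝ (fun θ' => rkStage n p f a c Δt tm um θ' i) θ
            = ((fderiv ℝ (fun v => f v θ (tm + c i * Δt))
                  (um θ + ∑ j ∈ Finset.range i,
                    a i j • rkStage n p f a c Δt tm um θ j)).comp
                (fderiv ℝ um θ + ∑ j ∈ Finset.range i,
                  a i j • fderiv ℝ (fun θ' => rkStage n p f a c Δt tm um θ' j) θ))
              + fderiv ℝ
                  (fun θ' => f (um θ + ∑ j ∈ Finset.range i,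
                    a i j • rkStage n p f a c Δt tm um θ j) θ' (tm + c i * Δt)) θ)
      ∧ fderiv ℝ (fun θ' => um θ'
            + Δt • ∑ i ∈ Finset.range σ, b i • rkStage n p f a c Δt tm um θ' i) θ
          = fderiv ℝ um θ
            + Δt • ∑ i ∈ Finset.range σ,
                b i • fderiv ℝ (fun θ' => rkStage n p f a c Δt tm um θ' i) θ := by
  have hstage := hasFDerivAt_rkStage (a := a) (c := c) (Δt := Δt) (tm := tm)
    (hf.differentiable one_ne_zero) (hum θ)
  refine ⟨fun i => (hstage i).differentiableAt, fun i => (hstage i).fderiv, ?_⟩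
  exact ((hum θ).hasFDerivAt.add <| (HasFDerivAt.fun_sum (u := Finset.range σ) fun i _ =>
    (hstage i).differentiableAt.hasFDerivAt.const_smul (b i)).const_smul Δt).fderiv

/-- Forward-mode differentiation of an explicit Runge–Kutta step yields exactly the same
Runge–Kutta scheme applied to the forward sensitivity equation: every stage `k_i` is
differentiable in `θ`, its derivative `k̇_i` satisfies
`k̇_i = (∂f/∂u)(u^m + Σ_{j<i} a_{ij} k_j, θ, t_m + c_i Δt)(s^m + Σ_{j<i} a_{ij} k̇_j)
      + (∂f/∂θ)(u^m + Σ_{j<i} a_{ij} k_j, θ, t_m + c_i Δt)`,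
and `D_θ u^{m+1}(θ) = s^m + Δt Σ_i b_i k̇_i`. -/
theorem forward_AD_runge_kutta_consistency
    (n p σ : ℕ)
    (f : (Fin n → ℝ) → (Fin p → ℝ) → ℝ → (Fin n → ℝ))
    (hf : ContDiff ℝ 1 (fun q : (Fin n → ℝ) × (Fin p → ℝ) × ℝ => f q.1 q.2.1 q.2.2))
    (a : ℕ → ℕ → ℝ) (b : ℕ → ℝ) (c : ℕ → ℝ) (Δt : ℝ) (hΔt : 0 < Δt) (tm : ℝ)
    (um : (Fin p → ℝ) → (Fin n → ℝ)) (hum : Differentiable ℝ um) (θ : Fin p → ℝ) :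
    (∀ i : ℕ, DifferentiableAt ℝ (fun θ' => rkStage n p f a c Δt tm um θ' i) θ)
      ∧ (∀ i : ℕ,
          fderiv ℝ (fun θ' => rkStage n p f a c Δt tm um θ' i) θ
            = ((fderiv ℝ (fun v => f v θ (tm + c i * Δt))
                  (um θ + ∑ j ∈ Finset.range i,
                    a i j • rkStage n p f a c Δt tm um θ j)).comp
                (fderiv ℝ um θ + ∑ j ∈ Finset.range i,
                  a i j • fderiv ℝ (fun θ' => rkStage n p f a c Δt tm um θ' j) θ))
              + fderiv ℝ
                  (fun θ' => f (um θ + ∑ j ∈ Finset.range i,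
                    a i j • rkStage n p f a c Δt tm um θ j) θ' (tm + c i * Δt)) θ)
      ∧ fderiv ℝ (fun θ' => um θ'
            + Δt • ∑ i ∈ Finset.range σ, b i • rkStage n p f a c Δt tm um θ' i) θ
          = fderiv ℝ um θ
            + Δt • ∑ i ∈ Finset.range σ,
                b i • fderiv ℝ (fun θ' => rkStage n p f a c Δt tm um θ' i) θ :=
  forward_AD_runge_kutta_consistency_general n p σ f hf a b c Δt tm um hum θ
end
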